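/- arXiv:1809.04232 — 4 statements merged into one kernel-verified Lean document; each statement's English description precedes it below -/
import Mathlib

section
/- One-step recursion bound for the safe sets: for every time i > t₀, Ŝ_{i−1} ∩ G_{i−1}^{i+1}(l, Ŝ_{i−1}) ⊆ Ŝ_i; in particular |Ŝ_i| ≥ |Ŝ_{i−1} ∩ G_{i−1}^{i+1}(l, Ŝ_{i−1})|. -/
/-- Combined Lipschitz bound `L(s, s', τ, τ') = L_s·d_s(s,s') + L_t·|τ − τ'|·Δ`. -/
def Lfun {S : Type*} (ds : S → S → ℝ) (Ls Lt Δ : ℝ) (s s' : S) (τ τ' : ℕ) : ℝ :=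
  Ls * ds s s' + Lt * |(τ : ℝ) - (τ' : ℝ)| * Δ

/-- One-step safe set `S_t(l, X)` (for `t ≥ 1`). -/
def oneStepSafe {S : Type*} (ds : S → S → ℝ) (Ls Lt Δ h : ℝ) (l : ℕ → S → ℝ)
    (X : Set S) (t : ℕ) : Set S :=
  {s | ∃ s' ∈ X, l (t - 1) s' - Lfun ds Ls Lt Δ s s' t (t - 1) ≥ h}

/-- Conservative safe set `G_{τ'}^{τ}(l, X)` (for `τ' < τ`). -/
def consSafe {S : Type*} (ds : S → S → ℝ) (Ls Lt Δ h : ℝ) (l : ℕ → S → ℝ)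
    (X : Set S) (τ' τ : ℕ) : Set S :=
  {s | ∃ s' ∈ X, l τ' s' - Lfun ds Ls Lt Δ s s' τ τ' ≥ h}
/-- One-step reachable set: `X` together with the states reachable from `X` in one step. -/
def Rreach {S A : Type*} (f : S → A → S) (X : Set S) : Set S :=
  X ∪ {s | ∃ s' ∈ X, ∃ a : A, s = f s' a}

/-- One-step returnable set: `X` together with the states from which `X` can be
reached in one step. -/
def Rret {S A : Type*} (f : S → A → S) (X : Set S) : Set S :=
  X ∪ {s | ∃ a : A, f s a ∈ X}

/-- The recursively defined safe sets: `hatS … i = Ŝ_i`, with `Ŝ_{t₀} = X₀` and, for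
`i > t₀`, `Ŝ_i = S_i(l, Ŝ_{i−1}) ∩ R_reach(Ŝ_{i−1}) ∩ R_ret(G_{i−1}^{i+1}(l, Ŝ_{i−1}))`. -/
def hatS {S A : Type*} (f : S → A → S) (ds : S → S → ℝ) (Ls Lt Δ h : ℝ)
    (l : ℕ → S → ℝ) (t₀ : ℕ) (X₀ : Set S) : ℕ → Set S := fun i =>
  Nat.rec X₀
    (fun n prev =>
      oneStepSafe ds Ls Lt Δ h l prev (t₀ + n + 1) ∩ Rreach f prev ∩
        Rret f (consSafe ds Ls Lt Δ h l prev (t₀ + n) (t₀ + n + 2)))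
    (i - t₀)


/-!
A state `s ∈ Ŝ_{i-1}` certified safe two steps ahead by `s' ∈ Ŝ_{i-1}` is certified safe one
step ahead by the same `s'`, since the Lipschitz margin grows with the time gap. Hence it
passes the one-step safety test, and it lies in `R_reach(Ŝ_{i-1})` and in
`R_ret(G_{i-1}^{i+1})` because each of these sets contains its argument.
-/

section SafeSets

variable {S A : Type*} (f : S → A → S) (ds : S → S → ℝ) (Ls Lt Δ h : ℝ) (l : ℕ → S → ℝ)

theorem Lfun_le_Lfun_of_le {s s' : S} {τ' σ τ : ℕ} (hLt : 0 ≤ Lt) (hΔ : 0 ≤ Δ)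
    (hσ : τ' ≤ σ) (hστ : σ ≤ τ) :
    Lfun ds Ls Lt Δ s s' σ τ' ≤ Lfun ds Ls Lt Δ s s' τ τ' := by
  have hgap : |(σ : ℝ) - τ'| ≤ |(τ : ℝ) - τ'| := by
    have hσ' : (τ' : ℝ) ≤ σ := by exact_mod_cast hσ
    have hστ' : (σ : ℝ) ≤ τ := by exact_mod_cast hστ
    rw [abs_of_nonneg (by linarith), abs_of_nonneg (by linarith)]
    linarith
  unfold Lfun
  gcongr

theorem consSafe_subset_consSafe_of_le {X : Set S} {τ' σ τ : ℕ} (hLt : 0 ≤ Lt) (hΔ : 0 ≤ Δ)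
    (hσ : τ' ≤ σ) (hστ : σ ≤ τ) :
    consSafe ds Ls Lt Δ h l X τ' τ ⊆ consSafe ds Ls Lt Δ h l X τ' σ := by
  rintro s ⟨s', hs', hsafe⟩
  exact ⟨s', hs', le_trans hsafe (by gcongr; exact Lfun_le_Lfun_of_le ds Ls Lt Δ hLt hΔ hσ hστ)⟩

theorem oneStepSafe_eq_consSafe (X : Set S) (t : ℕ) :
    oneStepSafe ds Ls Lt Δ h l X t = consSafe ds Ls Lt Δ h l X (t - 1) t :=
  rfl

theorem hatS_succ (t₀ : ℕ) (X₀ : Set S) {k : ℕ} (hk : t₀ ≤ k) :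
    hatS f ds Ls Lt Δ h l t₀ X₀ (k + 1) =
      oneStepSafe ds Ls Lt Δ h l (hatS f ds Ls Lt Δ h l t₀ X₀ k) (k + 1) ∩
        Rreach f (hatS f ds Ls Lt Δ h l t₀ X₀ k) ∩
        Rret f (consSafe ds Ls Lt Δ h l (hatS f ds Ls Lt Δ h l t₀ X₀ k) k (k + 2)) := by
  obtain ⟨n, rfl⟩ := Nat.exists_eq_add_of_le hk
  unfold hatS
  rw [show t₀ + n + 1 - t₀ = n + 1 by omega, show t₀ + n - t₀ = n by omega]

theorem inter_consSafe_subset_hatS_succ (hLt : 0 ≤ Lt) (hΔ : 0 ≤ Δ) (t₀ : ℕ) (X₀ : Set S)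
    {k : ℕ} (hk : t₀ ≤ k) :
    hatS f ds Ls Lt Δ h l t₀ X₀ k ∩
        consSafe ds Ls Lt Δ h l (hatS f ds Ls Lt Δ h l t₀ X₀ k) k (k + 2) ⊆
      hatS f ds Ls Lt Δ h l t₀ X₀ (k + 1) := by
  rintro s ⟨hs, hG⟩
  have hone : s ∈ oneStepSafe ds Ls Lt Δ h l (hatS f ds Ls Lt Δ h l t₀ X₀ k) (k + 1) := by
    rw [oneStepSafe_eq_consSafe, Nat.add_sub_cancel]
    exact consSafe_subset_consSafe_of_le ds Ls Lt Δ h l hLt hΔ (by omega) (by omega) hG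
  rw [hatS_succ f ds Ls Lt Δ h l t₀ X₀ hk]
  exact ⟨⟨hone, Or.inl hs⟩, Or.inl hG⟩

end SafeSets

theorem hatS_one_step_recursion_bound_general {S A : Type*} [Fintype S]
    (f : S → A → S)
    (ds : S → S → ℝ)
    (Ls Lt Δ : ℝ) (hLt : 0 ≤ Lt) (hΔ : 0 ≤ Δ) (h : ℝ)
    (l : ℕ → S → ℝ) (t₀ : ℕ) (X₀ : Set S)
    (i : ℕ) (hi : t₀ < i) :
    hatS f ds Ls Lt Δ h l t₀ X₀ (i - 1) ∩
        consSafe ds Ls Lt Δ h l (hatS f ds Ls Lt Δ h l t₀ X₀ (i - 1)) (i - 1) (i + 1) ⊆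
      hatS f ds Ls Lt Δ h l t₀ X₀ i ∧
    (hatS f ds Ls Lt Δ h l t₀ X₀ (i - 1) ∩
        consSafe ds Ls Lt Δ h l (hatS f ds Ls Lt Δ h l t₀ X₀ (i - 1)) (i - 1) (i + 1)).ncard ≤
      (hatS f ds Ls Lt Δ h l t₀ X₀ i).ncard := by
  obtain ⟨k, rfl⟩ : ∃ k, i = k + 1 := ⟨i - 1, by omega⟩
  have hsub := inter_consSafe_subset_hatS_succ f ds Ls Lt Δ h l hLt hΔ t₀ X₀ (k := k) (by omega)
  rw [Nat.add_sub_cancel]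
  exact ⟨hsub, Set.ncard_le_ncard hsub⟩

theorem hatS_one_step_recursion_bound {S A : Type*} [Fintype S] [Fintype A]
    (f : S → A → S)
    (ds : S → S → ℝ) (hds_nonneg : ∀ s s' : S, 0 ≤ ds s s')
    (hds_refl : ∀ s : S, ds s s = 0)
    (Ls Lt Δ : ℝ) (hLs : 0 ≤ Ls) (hLt : 0 ≤ Lt) (hΔ : 0 ≤ Δ) (h : ℝ)
    (l : ℕ → S → ℝ) (t₀ : ℕ) (ht₀ : 1 ≤ t₀) (X₀ : Set S)
    (i : ℕ) (hi : t₀ < i) :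
    hatS f ds Ls Lt Δ h l t₀ X₀ (i - 1) ∩
        consSafe ds Ls Lt Δ h l (hatS f ds Ls Lt Δ h l t₀ X₀ (i - 1)) (i - 1) (i + 1) ⊆
      hatS f ds Ls Lt Δ h l t₀ X₀ i ∧
    (hatS f ds Ls Lt Δ h l t₀ X₀ (i - 1) ∩
        consSafe ds Ls Lt Δ h l (hatS f ds Ls Lt Δ h l t₀ X₀ (i - 1)) (i - 1) (i + 1)).ncard ≤
      (hatS f ds Ls Lt Δ h l t₀ X₀ i).ncard :=
  hatS_one_step_recursion_bound_general f ds Ls Lt Δ hLt hΔ h l t₀ X₀ i hi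
end

section
/- Additional observations can only enlarge the recursively defined safe sets (the content of Lemma 1 of the paper): if l, l' : ℕ × S → ℝ satisfy l(τ, s) ≤ l'(τ, s) for all τ ∈ ℕ and s ∈ S, and the two recursions are started from the same initial safe set Ŝ_{t₀}(l) = Ŝ_{t₀}(l') = X₀ ⊆ S, then for every i ≥ t₀, Ŝ_i(l) ⊆ Ŝ_i(l'); consequently Σ_{i=t₀}^{N} |Ŝ_i(l')| ≥ Σ_{i=t₀}^{N} |Ŝ_i(l)| for every N ≥ t₀. -/
theorem hatS_mono_in_lower_bound {S A : Type*} [Fintype S] [Fintype A]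
    (f : S → A → S)
    (ds : S → S → ℝ) (hds_nonneg : ∀ s s' : S, 0 ≤ ds s s')
    (hds_refl : ∀ s : S, ds s s = 0)
    (Ls Lt Δ : ℝ) (hLs : 0 ≤ Ls) (hLt : 0 ≤ Lt) (hΔ : 0 ≤ Δ) (h : ℝ)
    (l l' : ℕ → S → ℝ) (hll' : ∀ (τ : ℕ) (s : S), l τ s ≤ l' τ s)
    (t₀ : ℕ) (ht₀ : 1 ≤ t₀) (X₀ : Set S) :
    (∀ i : ℕ, t₀ ≤ i →
      hatS f ds Ls Lt Δ h l t₀ X₀ i ⊆ hatS f ds Ls Lt Δ h l' t₀ X₀ i) ∧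
    (∀ N : ℕ, t₀ ≤ N →
      ∑ i ∈ Finset.Icc t₀ N, (hatS f ds Ls Lt Δ h l t₀ X₀ i).ncard ≤
        ∑ i ∈ Finset.Icc t₀ N, (hatS f ds Ls Lt Δ h l' t₀ X₀ i).ncard) := by
  have key : ∀ i : ℕ, hatS f ds Ls Lt Δ h l t₀ X₀ i ⊆ hatS f ds Ls Lt Δ h l' t₀ X₀ i := by
    intro i
    unfold hatS
    induction i - t₀ with
    | zero => exact le_refl _
    | succ n ih =>
      simp only [Nat.rec]
      intro s hs
      obtain ⟨⟨h1, h2⟩, h3⟩ := hs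
      refine ⟨⟨?_, ?_⟩, ?_⟩
      · obtain ⟨s', hs', hineq⟩ := h1
        exact ⟨s', ih hs', le_trans hineq (by
          have := hll' (t₀ + n + 1 - 1) s'; linarith)⟩
      · rcases h2 with h2 | ⟨s', hs', a, ha⟩
        · exact Or.inl (ih h2)
        · exact Or.inr ⟨s', ih hs', a, ha⟩
      · rcases h3 with h3 | ⟨a, ha⟩
        · left
          obtain ⟨s', hs', hineq⟩ := h3
          exact ⟨s', ih hs', le_trans hineq (by have := hll' (t₀ + n) s'; linarith)⟩
        · right
          obtain ⟨s', hs', hineq⟩ := ha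
          exact ⟨a, s', ih hs', le_trans hineq (by have := hll' (t₀ + n) s'; linarith)⟩
  refine ⟨fun i _ => key i, fun N _ => ?_⟩
  apply Finset.sum_le_sum
  intro i _
  exact Set.ncard_le_ncard (key i) (Set.toFinite _)
end

section
/- Probabilistic safety propagation (Lemma on Pr[g ≥ h] of the paper): for all times τ, τ' ∈ ℕ and states s, s' ∈ S, if l(τ', s') − L(s, s', τ, τ') ≥ h, then μ{ ω | G_ω(τ, s) ≥ h } ≥ μ{ ω | G_ω(τ', s') ≥ l(τ', s') }. -/
open MeasureTheory

theorem probabilistic_safety_propagation {S : Type*} [Fintype S]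
    {Ω : Type*} [MeasurableSpace Ω] (μ : Measure Ω) [IsProbabilityMeasure μ]
    (ds : S → S → ℝ) (hds_nonneg : ∀ s s' : S, 0 ≤ ds s s')
    (hds_refl : ∀ s : S, ds s s = 0)
    (Ls Lt Δ : ℝ) (hLs : 0 ≤ Ls) (hLt : 0 ≤ Lt) (hΔ : 0 ≤ Δ) (h : ℝ)
    (G : Ω → ℕ → S → ℝ)
    (hG_meas : ∀ (τ : ℕ) (s : S), Measurable fun ω => G ω τ s)
    (hG_lip : ∀ (ω : Ω) (τ τ' : ℕ) (s s' : S),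
      |G ω τ s - G ω τ' s'| ≤ Lfun ds Ls Lt Δ s s' τ τ')
    (l : ℕ → S → ℝ)
    (τ τ' : ℕ) (s s' : S)
    (hsafe : l τ' s' - Lfun ds Ls Lt Δ s s' τ τ' ≥ h) :
    μ {ω | G ω τ' s' ≥ l τ' s'} ≤ μ {ω | G ω τ s ≥ h} := by
  apply measure_mono
  intro ω hω
  simp only [Set.mem_setOf_eq] at hω ⊢
  have hlip := (abs_le.mp (hG_lip ω τ τ' s s')).1
  linarith
end

section
/- Safety guarantee for states in the one-step safe set (Theorem 2 of the paper, with the correctness of the confidence bounds taken as a hypothesis): suppose δ ∈ [0, 1] and the lower confidence bounds are correct with probability at least 1 − δ, i.e. μ{ ω | ∀ τ ∈ ℕ, ∀ s ∈ S, G_ω(τ, s) ≥ l(τ, s) } ≥ 1 − δ. Then for every t ≥ 1, every X ⊆ S, and every state s ∈ S_t(l, X), the probability that s is safe at time t satisfies μ{ ω | G_ω(t, s) ≥ h } ≥ 1 − δ. -/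
open MeasureTheory

theorem safety_guarantee_oneStepSafe {S : Type*} [Fintype S]
    {Ω : Type*} [MeasurableSpace Ω] (μ : Measure Ω) [IsProbabilityMeasure μ]
    (ds : S → S → ℝ) (hds_nonneg : ∀ s s' : S, 0 ≤ ds s s')
    (hds_refl : ∀ s : S, ds s s = 0)
    (Ls Lt Δ : ℝ) (hLs : 0 ≤ Ls) (hLt : 0 ≤ Lt) (hΔ : 0 ≤ Δ) (h : ℝ)
    (G : Ω → ℕ → S → ℝ)
    (hG_meas : ∀ (τ : ℕ) (s : S), Measurable fun ω => G ω τ s)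
    (hG_lip : ∀ (ω : Ω) (τ τ' : ℕ) (s s' : S),
      |G ω τ s - G ω τ' s'| ≤ Lfun ds Ls Lt Δ s s' τ τ')
    (l : ℕ → S → ℝ)
    (δ : ℝ) (hδ0 : 0 ≤ δ) (hδ1 : δ ≤ 1)
    (hconf : ENNReal.ofReal (1 - δ) ≤ μ {ω | ∀ (τ : ℕ) (s : S), G ω τ s ≥ l τ s})
    (t : ℕ) (ht : 1 ≤ t) (X : Set S) (s : S)
    (hs : s ∈ oneStepSafe ds Ls Lt Δ h l X t) :
    ENNReal.ofReal (1 - δ) ≤ μ {ω | G ω t s ≥ h} := by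
  refine le_trans hconf (μ.mono ?_)
  intro ω hω
  obtain ⟨s', hs'X, hs'⟩ := hs
  have h1 : G ω (t-1) s' ≥ l (t-1) s' := hω (t-1) s'
  have h2 := hG_lip ω t (t-1) s s'
  have h3 : G ω t s ≥ G ω (t-1) s' - Lfun ds Ls Lt Δ s s' t (t-1) := by
    have := (abs_le.mp h2).1; linarith
  show G ω t s ≥ h
  linarith
end
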